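/- arXiv:1909.03319 — 8 statements merged into one kernel-verified Lean document; each statement's English description precedes it below -/
import Mathlib

section
/- In the Incentive Game, let (x*, W*) be an optimal solution of the LP: maximize W + Σ_e x_e C_e subject to Σ_{e∈S}(-x_e + c_e) ≤ -W for all S ∈ 𝒮 (with x ranging over probability vectors on E). Let S* ∈ 𝒮 maximize Σ_{e∈S} c_e, and define V*_{S*} = -W* - Σ_{e∈S*}(-x*_e + c_e) and V*_S = 0 otherwise. Then for every feasible leader strategy (x', V') with V' ≥ 0, if S' is a best response of the follower to (x', V'), the leader's utility satisfies U_L((x*,V*),S*) ≥ U_L((x',V'),S'), where U_L((x,V),S) = Σ_{e∈S} x_e - V_S + Σ_{e∈E} x_e C_e. -/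
/-- Theorem 1 of the paper: the leader strategy `(x*, V*)` constructed from an
optimal LP solution is an optimal leader strategy in the Incentive Game. -/
theorem incentive_game_optimal {E : Type*} [Fintype E] [DecidableEq E]
    (𝒮 : Finset (Finset E)) (h𝒮 : 𝒮.Nonempty) (C c : E → ℝ)
    (xs : E → ℝ) (Ws : ℝ)
    (hxs0 : ∀ e, 0 ≤ xs e) (hxs1 : ∑ e, xs e = 1)
    (hfeas : ∀ S ∈ 𝒮, (∑ e ∈ S, (-xs e + c e)) ≤ -Ws)
    (hopt : ∀ (x : E → ℝ) (W : ℝ), (∀ e, 0 ≤ x e) → (∑ e, x e = 1) →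
      (∀ S ∈ 𝒮, (∑ e ∈ S, (-x e + c e)) ≤ -W) →
      W + ∑ e, x e * C e ≤ Ws + ∑ e, xs e * C e)
    (Ss : Finset E) (hSs : Ss ∈ 𝒮)
    (hSmax : ∀ S ∈ 𝒮, (∑ e ∈ S, c e) ≤ ∑ e ∈ Ss, c e)
    (Vs : Finset E → ℝ)
    (hVs : Vs = fun S => if S = Ss then -Ws - ∑ e ∈ Ss, (-xs e + c e) else 0)
    (x' : E → ℝ) (V' : Finset E → ℝ)
    (hx'0 : ∀ e, 0 ≤ x' e) (hx'1 : ∑ e, x' e = 1) (hV' : ∀ S, 0 ≤ V' S)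
    (S' : Finset E) (hS' : S' ∈ 𝒮)
    (hbr : ∀ S ∈ 𝒮,
      (∑ e ∈ S, (-x' e + c e)) + V' S ≤ (∑ e ∈ S', (-x' e + c e)) + V' S') :
    (∑ e ∈ S', x' e) - V' S' + ∑ e, x' e * C e ≤
      (∑ e ∈ Ss, xs e) - Vs Ss + ∑ e, xs e * C e := by
  subst hVs
  set W' : ℝ := -(∑ e ∈ S', (-x' e + c e)) - V' S' with hW'
  have hfeas' : ∀ S ∈ 𝒮, (∑ e ∈ S, (-x' e + c e)) ≤ -W' := by
    intro S hS
    have h1 := hbr S hS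
    have h2 := hV' S
    simp only [hW']
    linarith
  have hopt' := hopt x' W' hx'0 hx'1 hfeas'
  have hmax := hSmax S' hS'
  have e1 : ∑ e ∈ S', (-x' e + c e) = -∑ e ∈ S', x' e + ∑ e ∈ S', c e := by
    rw [Finset.sum_add_distrib, Finset.sum_neg_distrib]
  have e2 : ∑ e ∈ Ss, (-xs e + c e) = -∑ e ∈ Ss, xs e + ∑ e ∈ Ss, c e := by
    rw [Finset.sum_add_distrib, Finset.sum_neg_distrib]
  simp only [if_pos rfl, if_true]
  linarith
end

section
/- In the Incentive Game with the leader strategy (x*, V*) constructed from the LP optimum as above, S* is a best response of the follower to (x*, V*): U_F((x*,V*),S*) ≥ U_F((x*,V*),S) for all S ∈ 𝒮. -/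
/-- With the incentives `V*` constructed from the LP optimum, `S*` is a best
response of the follower to `(x*, V*)`. -/
theorem Ss_best_response {E : Type*} [Fintype E] [DecidableEq E]
    (𝒮 : Finset (Finset E)) (h𝒮 : 𝒮.Nonempty) (C c : E → ℝ)
    (xs : E → ℝ) (Ws : ℝ)
    (hxs0 : ∀ e, 0 ≤ xs e) (hxs1 : ∑ e, xs e = 1)
    (hfeas : ∀ S ∈ 𝒮, (∑ e ∈ S, (-xs e + c e)) ≤ -Ws)
    (hopt : ∀ (x : E → ℝ) (W : ℝ), (∀ e, 0 ≤ x e) → (∑ e, x e = 1) →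
      (∀ S ∈ 𝒮, (∑ e ∈ S, (-x e + c e)) ≤ -W) →
      W + ∑ e, x e * C e ≤ Ws + ∑ e, xs e * C e)
    (Ss : Finset E) (hSs : Ss ∈ 𝒮)
    (hSmax : ∀ S ∈ 𝒮, (∑ e ∈ S, c e) ≤ ∑ e ∈ Ss, c e)
    (Vs : Finset E → ℝ)
    (hVs : Vs = fun S => if S = Ss then -Ws - ∑ e ∈ Ss, (-xs e + c e) else 0) :
    ∀ S ∈ 𝒮, (∑ e ∈ S, (-xs e + c e)) + Vs S ≤ (∑ e ∈ Ss, (-xs e + c e)) + Vs Ss := by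
  subst hVs
  intro S hS
  by_cases h : S = Ss
  · subst h; simp
  · simp only [h, if_false, if_true, if_pos rfl]
    have := hfeas S hS
    linarith
end

section
/- In the reduction from Maximum 3D Matching: given a tripartite hypergraph G with vertex parts A, B, C and hyperedges T ⊆ A×B×C, construct the bipartite multigraph G' with vertex set (A' ∪ A'') ∪ (B' ∪ C') (two disjoint copies a', a'' of each a ∈ A, and copies b', c' of b ∈ B, c ∈ C), where each hyperedge t = (a,b,c) contributes two edges e_t = (a',b') and f_t = (a'',c'), and π swaps e_t and f_t for each t. Then for every 3-dimensional matching M of G (a set of pairwise vertex-disjoint hyperedges) there exists a matching M' of G' with |M' ∩ π(M')| = 2|M|. -/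
/-- The endpoints of the edge `(t, side)` of the bipartite multigraph `G'`:
`(t, true)` joins `a'_t` to `b'_t` and `(t, false)` joins `a''_t` to `c'_t`.
Vertices of `G'` are `(A' ⊕ A'') ⊕ (B' ⊕ C')`. -/
def hEnds {A B C : Type*} [DecidableEq A] [DecidableEq B] [DecidableEq C]
    (e : (A × B × C) × Bool) : Finset ((A ⊕ A) ⊕ (B ⊕ C)) :=
  if e.2 then {Sum.inl (Sum.inl e.1.1), Sum.inr (Sum.inl e.1.2.1)}
  else {Sum.inl (Sum.inr e.1.1), Sum.inr (Sum.inr e.1.2.2)}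

/-- A matching of `G'`: a set of edges, each coming from a hyperedge of `T`,
no two of which share a vertex. -/
def IsMatchingG' {A B C : Type*} [DecidableEq A] [DecidableEq B] [DecidableEq C]
    (T : Finset (A × B × C)) (M' : Finset ((A × B × C) × Bool)) : Prop :=
  (∀ e ∈ M', e.1 ∈ T) ∧
  ∀ e ∈ M', ∀ f ∈ M', e ≠ f → Disjoint (hEnds e) (hEnds f)

/-- A 3-dimensional matching of the tripartite hypergraph with hyperedge set `T`:
a set of hyperedges no two of which agree in any coordinate. -/
def Is3DM {A B C : Type*} (T : Finset (A × B × C)) (M : Finset (A × B × C)) : Prop :=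
  (∀ t ∈ M, t ∈ T) ∧
  ∀ t ∈ M, ∀ s ∈ M, t ≠ s → t.1 ≠ s.1 ∧ t.2.1 ≠ s.2.1 ∧ t.2.2 ≠ s.2.2

/-- The `π`-transformation swapping the two edges coming from each hyperedge. -/
def piSwap {A B C : Type*} [DecidableEq A] [DecidableEq B] [DecidableEq C]
    (M' : Finset ((A × B × C) × Bool)) : Finset ((A × B × C) × Bool) :=
  M'.image (fun e => (e.1, !e.2))

/-- For every 3-dimensional matching `M` of `G` there is a matching `M'` of `G'`
with `|M' ∩ π(M')| = 2|M|`. -/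
theorem threeDM_to_permuted_matching {A B C : Type*}
    [DecidableEq A] [DecidableEq B] [DecidableEq C]
    (T : Finset (A × B × C)) (M : Finset (A × B × C)) (hM : Is3DM T M) :
    ∃ M' : Finset ((A × B × C) × Bool),
      IsMatchingG' T M' ∧ (M' ∩ piSwap M').card = 2 * M.card := by
  refine ⟨M ×ˢ Finset.univ, ⟨?_, ?_⟩, ?_⟩
  · intro e he
    exact hM.1 _ (Finset.mem_product.1 he).1
  · intro e he f hf hne
    rw [Finset.mem_product] at he hf
    obtain ⟨t, st⟩ := e
    obtain ⟨s, ss⟩ := f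
    simp only at he hf
    by_cases hts : t = s
    · subst hts
      have : st ≠ ss := fun h => hne (by simp [h])
      rcases st <;> rcases ss <;> simp_all [hEnds, Finset.disjoint_left]
    · have h := hM.2 t he.1 s hf.1 hts
      rcases st <;> rcases ss <;>
        simp_all [hEnds, Finset.disjoint_left, Prod.ext_iff]
  · have hswap : piSwap (M ×ˢ (Finset.univ : Finset Bool)) = M ×ˢ Finset.univ := by
      ext ⟨t, b⟩
      simp only [piSwap, Finset.mem_image, Finset.mem_product, Finset.mem_univ, and_true]
      constructor
      · rintro ⟨⟨s, c⟩, hs, h⟩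
        simp only [Prod.mk.injEq] at h
        simpa [← h.1] using hs
      · intro ht
        exact ⟨(t, !b), ht, by simp⟩
    rw [hswap, Finset.inter_self, Finset.card_product]
    simp [mul_comm]
end

section
/- Conversely in the same reduction: for every matching M' of G' with |M' ∩ π(M')| = 2k, there exists a 3-dimensional matching of G of size k. Consequently, the maximum of |M' ∩ π(M')| over matchings M' of G' equals twice the maximum size of a 3-dimensional matching of G. -/
lemma mem_piSwap {A B C : Type*} [DecidableEq A] [DecidableEq B] [DecidableEq C]
    {M' : Finset ((A × B × C) × Bool)} {e : (A × B × C) × Bool} :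
    e ∈ piSwap M' ↔ (e.1, !e.2) ∈ M' := by
  simp only [piSwap, Finset.mem_image]
  constructor
  · rintro ⟨f, hf, rfl⟩; simpa using hf
  · intro h; exact ⟨(e.1, !e.2), h, by simp⟩

lemma extract {A B C : Type*} [DecidableEq A] [DecidableEq B] [DecidableEq C]
    (T : Finset (A × B × C)) (M' : Finset ((A × B × C) × Bool))
    (hM : IsMatchingG' T M') :
    ∃ S, Is3DM T S ∧ (M' ∩ piSwap M').card = 2 * S.card := by
  classical
  set I := M' ∩ piSwap M' with hI
  set S := I.image Prod.fst with hS
  have hmemI : ∀ (t : A × B × C) (b : Bool),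
      ((t, b) ∈ I ↔ ((t, true) ∈ M' ∧ (t, false) ∈ M')) := by
    intro t b
    simp only [hI, Finset.mem_inter, mem_piSwap]
    cases b <;> simp <;> tauto
  have hSmem : ∀ t : A × B × C, t ∈ S ↔ ((t, true) ∈ M' ∧ (t, false) ∈ M') := by
    intro t
    simp only [hS, Finset.mem_image]
    constructor
    · rintro ⟨f, hf, rfl⟩; exact (hmemI f.1 f.2).mp hf
    · intro h; exact ⟨(t, true), (hmemI t true).mpr h, rfl⟩
  have hprod : I = S ×ˢ (Finset.univ : Finset Bool) := by
    ext ⟨t, b⟩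
    simp only [Finset.mem_product, Finset.mem_univ, and_true]
    rw [hmemI, hSmem]
  refine ⟨S, ⟨?_, ?_⟩, ?_⟩
  · intro t ht
    exact hM.1 (t, true) ((hSmem t).mp ht).1
  · intro t ht s hs hne
    obtain ⟨ht1, ht2⟩ := (hSmem t).mp ht
    obtain ⟨hs1, hs2⟩ := (hSmem s).mp hs
    have d1 := hM.2 (t, true) ht1 (s, true) hs1 (by simp [hne])
    have d2 := hM.2 (t, false) ht2 (s, false) hs2 (by simp [hne])
    refine ⟨?_, ?_, ?_⟩
    · intro h
      have m1 : (Sum.inl (Sum.inl t.1) : (A ⊕ A) ⊕ (B ⊕ C)) ∈ hEnds (t, true) := by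
        simp [hEnds]
      have m2 : (Sum.inl (Sum.inl t.1) : (A ⊕ A) ⊕ (B ⊕ C)) ∈ hEnds (s, true) := by
        simp [hEnds, h]
      exact Finset.disjoint_left.mp d1 m1 m2
    · intro h
      have m1 : (Sum.inr (Sum.inl t.2.1) : (A ⊕ A) ⊕ (B ⊕ C)) ∈ hEnds (t, true) := by
        simp [hEnds]
      have m2 : (Sum.inr (Sum.inl t.2.1) : (A ⊕ A) ⊕ (B ⊕ C)) ∈ hEnds (s, true) := by
        simp [hEnds, h]
      exact Finset.disjoint_left.mp d1 m1 m2
    · intro h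
      have m1 : (Sum.inr (Sum.inr t.2.2) : (A ⊕ A) ⊕ (B ⊕ C)) ∈ hEnds (t, false) := by
        simp [hEnds]
      have m2 : (Sum.inr (Sum.inr t.2.2) : (A ⊕ A) ⊕ (B ⊕ C)) ∈ hEnds (s, false) := by
        simp [hEnds, h]
      exact Finset.disjoint_left.mp d2 m1 m2
  · rw [hprod, Finset.card_product]
    simp [Fintype.card_bool, Nat.mul_comm]

lemma build {A B C : Type*} [DecidableEq A] [DecidableEq B] [DecidableEq C]
    (T : Finset (A × B × C)) (M : Finset (A × B × C)) (h3 : Is3DM T M) :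
    IsMatchingG' T (M ×ˢ Finset.univ) ∧
      ((M ×ˢ Finset.univ) ∩ piSwap (M ×ˢ Finset.univ)).card = 2 * M.card := by
  classical
  have hmem : ∀ e : (A × B × C) × Bool, e ∈ M ×ˢ (Finset.univ : Finset Bool) ↔ e.1 ∈ M := by
    intro e; simp [Finset.mem_product]
  constructor
  · constructor
    · intro e he; exact h3.1 e.1 ((hmem e).mp he)
    · rintro ⟨t, b⟩ he ⟨s, b'⟩ hf hne
      rw [hmem] at he hf
      by_cases hts : t = s
      · subst hts
        have hbb : b ≠ b' := by simpa using hne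
        cases b <;> cases b' <;> simp_all [hEnds, Finset.disjoint_insert_left,
          Finset.disjoint_singleton]
      · obtain ⟨h1, h2, h3'⟩ := h3.2 t he s hf hts
        cases b <;> cases b' <;>
          simp [hEnds, Finset.disjoint_insert_left, Finset.disjoint_singleton,
            h1, h2, h3', Ne.symm h1, Ne.symm h2, Ne.symm h3']
  · have hfix : piSwap (M ×ˢ (Finset.univ : Finset Bool)) = M ×ˢ Finset.univ := by
      ext e; rw [mem_piSwap, hmem, hmem]
    rw [hfix, Finset.inter_self, Finset.card_product]
    simp [Nat.mul_comm]

/-- Every matching `M'` of `G'` with `|M' ∩ π(M')| = 2k` yields a 3-dimensional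
matching of size `k`; consequently the maximum of `|M' ∩ π(M')|` over matchings
of `G'` equals twice the maximum size of a 3-dimensional matching of `G`. -/
theorem permuted_matching_to_threeDM {A B C : Type*}
    [DecidableEq A] [DecidableEq B] [DecidableEq C]
    (T : Finset (A × B × C)) :
    (∀ (M' : Finset ((A × B × C) × Bool)) (k : ℕ), IsMatchingG' T M' →
      (M' ∩ piSwap M').card = 2 * k → ∃ M, Is3DM T M ∧ M.card = k) ∧
    ∃ v : ℕ,
      IsGreatest {n : ℕ | ∃ M', IsMatchingG' T M' ∧ (M' ∩ piSwap M').card = n} (2 * v) ∧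
      IsGreatest {k : ℕ | ∃ M, Is3DM T M ∧ M.card = k} v := by
  classical
  have part1 : ∀ (M' : Finset ((A × B × C) × Bool)) (k : ℕ), IsMatchingG' T M' →
      (M' ∩ piSwap M').card = 2 * k → ∃ M, Is3DM T M ∧ M.card = k := by
    intro M' k hM hcard
    obtain ⟨S, hS3, hSc⟩ := extract T M' hM
    exact ⟨S, hS3, by omega⟩
  refine ⟨part1, ?_⟩
  set K := {k : ℕ | ∃ M, Is3DM T M ∧ M.card = k} with hK
  have hne : K.Nonempty := ⟨0, ∅, ⟨by simp, by simp⟩, by simp⟩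
  have hbdd : BddAbove K := by
    refine ⟨T.card, ?_⟩
    rintro k ⟨M, hM3, rfl⟩
    exact Finset.card_le_card (fun t ht => hM3.1 t ht)
  set v := sSup K with hv
  have hvK : v ∈ K := Nat.sSup_mem hne hbdd
  obtain ⟨M, hM3, hMc⟩ := hvK
  obtain ⟨hmatch, hcard⟩ := build T M hM3
  refine ⟨v, ⟨⟨M ×ˢ Finset.univ, hmatch, by rw [hcard, hMc]⟩, ?_⟩, ⟨⟨M, hM3, hMc⟩, ?_⟩⟩
  · rintro n ⟨M', hM', rfl⟩
    obtain ⟨S, hS3, hSc⟩ := extract T M' hM'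
    rw [hSc]
    exact Nat.mul_le_mul_left 2 (le_csSup hbdd ⟨S, hS3, rfl⟩)
  · rintro k hk
    exact le_csSup hbdd hk
end

section
/- Greedy 4-approximation for π-paired matchings: let x, x' be matchings in a graph G and π a permutation of the edges, such that x and x' are in 'greedy maximal' position, i.e., |x| = |x'| = |x ∩ π(x')| and there is no pair of edges (e, e') with e = π(e'), e vertex-disjoint from x, and e' vertex-disjoint from x'. Then for all matchings y, y' of G, |y ∩ π(y')| ≤ 4·|x ∩ π(x')|. -/
/-- The endpoints of an edge, for a multigraph given by endpoint maps. -/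
def ends {V E : Type*} [DecidableEq V] (fst snd : E → V) (e : E) : Finset V :=
  {fst e, snd e}

/-- The set of vertices covered by a set of edges. -/
def everts {V E : Type*} [DecidableEq V] (fst snd : E → V) (S : Finset E) : Finset V :=
  S.biUnion (ends fst snd)

/-- A matching: a set of pairwise vertex-disjoint edges. -/
def IsMatching {V E : Type*} [DecidableEq V] (fst snd : E → V) (S : Finset E) : Prop :=
  ∀ e ∈ S, ∀ f ∈ S, e ≠ f → Disjoint (ends fst snd e) (ends fst snd f)

lemma everts_card_le {V E : Type*} [DecidableEq V] [DecidableEq E]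
    (fst snd : E → V) (S : Finset E) : (everts fst snd S).card ≤ 2 * S.card := by
  classical
  calc (everts fst snd S).card ≤ ∑ e ∈ S, (ends fst snd e).card :=
        Finset.card_biUnion_le
    _ ≤ ∑ _e ∈ S, 2 := by
        refine Finset.sum_le_sum fun e _ => ?_
        simp [ends]
        exact Finset.card_insert_le _ _
    _ = 2 * S.card := by rw [Finset.sum_const, smul_eq_mul, mul_comm]

/-- Greedy 4-approximation: if `x, x'` are matchings in 'greedy maximal'
position (`|x| = |x'| = |x ∩ π(x')|` and no further pair `(π e', e')` can be
added), then every pair of matchings `y, y'` satisfies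
`|y ∩ π(y')| ≤ 4 |x ∩ π(x')|`. -/
theorem greedy_four_approx {V E : Type*} [DecidableEq V] [DecidableEq E]
    (fst snd : E → V) (π : Equiv.Perm E)
    (x x' : Finset E)
    (hx : IsMatching fst snd x) (hx' : IsMatching fst snd x')
    (hcard1 : x.card = x'.card)
    (hcard2 : x'.card = (x ∩ x'.image π).card)
    (hmax : ¬ ∃ e' : E, Disjoint (ends fst snd (π e')) (everts fst snd x) ∧
      Disjoint (ends fst snd e') (everts fst snd x'))
    (y y' : Finset E) (hy : IsMatching fst snd y) (hy' : IsMatching fst snd y') :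
    (y ∩ y'.image π).card ≤ 4 * (x ∩ x'.image π).card := by
  classical
  set S := y ∩ y'.image π with hS
  set S1 := S.filter (fun e => ¬ Disjoint (ends fst snd e) (everts fst snd x)) with hS1
  set S2 := S.filter (fun e => ¬ Disjoint (ends fst snd (π.symm e)) (everts fst snd x')) with hS2
  have hcover : S ⊆ S1 ∪ S2 := by
    intro e he
    by_contra h
    simp only [Finset.mem_union, hS1, hS2, Finset.mem_filter, not_or, not_and, not_not] at h
    exact hmax ⟨π.symm e, by simpa using h.1 he, h.2 he⟩
  -- bound S1 by injecting into everts x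
  have h1 : S1.card ≤ (everts fst snd x).card := by
    have : ∀ e ∈ S1, ((ends fst snd e) ∩ (everts fst snd x)).Nonempty := by
      intro e he
      rw [hS1, Finset.mem_filter] at he
      exact Finset.not_disjoint_iff_nonempty_inter.mp he.2
    refine Finset.card_le_card_of_injOn
      (fun e => if h : ((ends fst snd e) ∩ (everts fst snd x)).Nonempty then h.choose else fst e)
      (fun e he => ?_) (fun e1 he1 e2 he2 heq => ?_)
    · have h := this e he
      simp only [dif_pos h]
      exact (Finset.mem_inter.mp h.choose_spec).2
    · by_contra hne
      have h1 := this e1 he1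
      have h2 := this e2 he2
      simp only [dif_pos h1, dif_pos h2] at heq
      have hey1 : e1 ∈ y := (Finset.mem_inter.mp (Finset.mem_filter.mp he1).1).1
      have hey2 : e2 ∈ y := (Finset.mem_inter.mp (Finset.mem_filter.mp he2).1).1
      have := hy e1 hey1 e2 hey2 hne
      exact (Finset.disjoint_left.mp this (Finset.mem_inter.mp h1.choose_spec).1)
        (heq ▸ (Finset.mem_inter.mp h2.choose_spec).1)
  have h2 : S2.card ≤ (everts fst snd x').card := by
    have : ∀ e ∈ S2, ((ends fst snd (π.symm e)) ∩ (everts fst snd x')).Nonempty := by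
      intro e he
      rw [hS2, Finset.mem_filter] at he
      exact Finset.not_disjoint_iff_nonempty_inter.mp he.2
    refine Finset.card_le_card_of_injOn
      (fun e => if h : ((ends fst snd (π.symm e)) ∩ (everts fst snd x')).Nonempty then h.choose
        else fst (π.symm e))
      (fun e he => ?_) (fun e1 he1 e2 he2 heq => ?_)
    · have h := this e he
      simp only [dif_pos h]
      exact (Finset.mem_inter.mp h.choose_spec).2
    · by_contra hne
      have h1 := this e1 he1
      have h2 := this e2 he2
      simp only [dif_pos h1, dif_pos h2] at heq
      have hey1 : π.symm e1 ∈ y' := by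
        have := (Finset.mem_inter.mp (Finset.mem_filter.mp he1).1).2
        obtain ⟨f, hf, hfe⟩ := Finset.mem_image.mp this
        simpa [← hfe] using hf
      have hey2 : π.symm e2 ∈ y' := by
        have := (Finset.mem_inter.mp (Finset.mem_filter.mp he2).1).2
        obtain ⟨f, hf, hfe⟩ := Finset.mem_image.mp this
        simpa [← hfe] using hf
      have hne' : π.symm e1 ≠ π.symm e2 := fun h => hne (π.symm.injective h)
      have := hy' _ hey1 _ hey2 hne'
      exact (Finset.disjoint_left.mp this (Finset.mem_inter.mp h1.choose_spec).1)
        (heq ▸ (Finset.mem_inter.mp h2.choose_spec).1)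
  calc S.card ≤ (S1 ∪ S2).card := Finset.card_le_card hcover
    _ ≤ S1.card + S2.card := Finset.card_union_le _ _
    _ ≤ (everts fst snd x).card + (everts fst snd x').card := Nat.add_le_add h1 h2
    _ ≤ 2 * x.card + 2 * x'.card :=
        Nat.add_le_add (everts_card_le _ _ _) (everts_card_le _ _ _)
    _ = 4 * (x ∩ x'.image π).card := by rw [hcard1, hcard2]; ring
end

section
/- In the Permuted Matching game, let x, x' be matchings with |y ∩ π(y')| ≤ 4|x ∩ π(x')| for all matchings y, y' (e.g., the greedy output). Let 0 < ε < 1/3, let X play x with probability 1/3 - ε and x' with probability 2/3 + ε, and let y be any best response of the follower to X. Then the leader's expected payoff U_L(X,y) = (1/3-ε)|x ∩ π(y)| + (2/3+ε)|x' ∩ π(y)| is at least (1-3ε)/12 times the optimal Stackelberg leader payoff max over leader mixed strategies X̂ and follower best responses ŷ of U_L(X̂, ŷ). -/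
/-- The `(1-3ε)/12` approximation guarantee for the Permuted Matching game:
if `X` plays `x` w.p. `1/3-ε` and `x'` w.p. `2/3+ε` and `y` is a best response
of the follower to `X`, then the leader's payoff `U_L(X,y)` is at least
`(1-3ε)/12` times the leader's payoff at any mixed strategy `X̂` (weights `w`
on matchings `m i`) with best response `yh`. -/
theorem permuted_matching_approx {V E : Type*} [DecidableEq V] [DecidableEq E]
    (fst snd : E → V) (π : Equiv.Perm E)
    (x x' : Finset E) (hx : IsMatching fst snd x) (hx' : IsMatching fst snd x')
    (h4 : ∀ y y' : Finset E, IsMatching fst snd y → IsMatching fst snd y' →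
      (y ∩ y'.image π).card ≤ 4 * (x ∩ x'.image π).card)
    (ε : ℝ) (hε0 : 0 < ε) (hε1 : ε < 1/3)
    (y : Finset E) (hy : IsMatching fst snd y)
    (hbr : ∀ y'' : Finset E, IsMatching fst snd y'' →
      (1/3 - ε) * ((x ∩ y'').card : ℝ) + (2/3 + ε) * ((x' ∩ y'').card : ℝ) ≤
      (1/3 - ε) * ((x ∩ y).card : ℝ) + (2/3 + ε) * ((x' ∩ y).card : ℝ))
    {ι : Type*} [Fintype ι]
    (w : ι → ℝ) (hw0 : ∀ i, 0 ≤ w i) (hw1 : ∑ i, w i = 1)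
    (m : ι → Finset E) (hm : ∀ i, IsMatching fst snd (m i))
    (yh : Finset E) (hyh : IsMatching fst snd yh)
    (hyhbr : ∀ y'' : Finset E, IsMatching fst snd y'' →
      ∑ i, w i * ((m i ∩ y'').card : ℝ) ≤ ∑ i, w i * ((m i ∩ yh).card : ℝ)) :
    (1 - 3*ε)/12 * (∑ i, w i * ((m i ∩ yh.image π).card : ℝ)) ≤
      (1/3 - ε) * ((x ∩ y.image π).card : ℝ) +
        (2/3 + ε) * ((x' ∩ y.image π).card : ℝ) := by
  -- Step 1: every best response contains x'.
  have hsub : x' ⊆ y := by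
    intro e he
    by_contra hey
    set N : Finset E := y.filter (fun g => ¬ Disjoint (ends fst snd e) (ends fst snd g))
      with hNdef
    have hNy : N ⊆ y := Finset.filter_subset _ _
    -- |N| ≤ 2 : each edge of N is charged to an endpoint of e, injectively.
    have hNcard : N.card ≤ 2 := by
      have hinj : ∀ g ∈ N, (if fst e ∈ ends fst snd g then fst e else snd e) ∈ ends fst snd e ∧
          (if fst e ∈ ends fst snd g then fst e else snd e) ∈ ends fst snd g := by
        intro g hg
        have hgy := hNy hg
        have hnd : ¬ Disjoint (ends fst snd e) (ends fst snd g) :=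
          (Finset.mem_filter.mp hg).2
        by_cases hf : fst e ∈ ends fst snd g
        · rw [if_pos hf]; exact ⟨by simp [ends], hf⟩
        · simp only [if_neg hf]
          constructor
          · simp [ends]
          · rw [Finset.not_disjoint_iff] at hnd
            obtain ⟨v, hv1, hv2⟩ := hnd
            have : v = fst e ∨ v = snd e := by simpa [ends] using hv1
            rcases this with rfl | rfl
            · exact absurd hv2 hf
            · exact hv2
      have hle : N.card ≤ (ends fst snd e).card := by
        apply Finset.card_le_card_of_injOn
          (fun g => if fst e ∈ ends fst snd g then fst e else snd e)
        · intro g hg; exact (hinj g hg).1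
        · intro g1 hg1 g2 hg2 hEq
          simp only at hEq
          by_contra hne
          have hd := hy g1 (hNy hg1) g2 (hNy hg2) hne
          have h1 := (hinj g1 hg1).2
          have h2 := (hinj g2 hg2).2
          rw [hEq] at h1
          exact Finset.disjoint_left.mp hd h1 h2
      calc N.card ≤ (ends fst snd e).card := hle
        _ ≤ 2 := by
            simp only [ends]
            exact (Finset.card_insert_le _ _).trans (by simp)
    -- the swapped response
    set y'' : Finset E := insert e (y \ N) with hy''def
    have hy''m : IsMatching fst snd y'' := by
      intro a ha b hb hab
      have disj_of_mem : ∀ g, g ∈ y \ N → Disjoint (ends fst snd e) (ends fst snd g) := by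
        intro g hg
        have := Finset.mem_sdiff.mp hg
        by_contra hc
        exact this.2 (Finset.mem_filter.mpr ⟨this.1, hc⟩)
      rcases Finset.mem_insert.mp ha with rfl | ha' <;>
        rcases Finset.mem_insert.mp hb with rfl | hb'
      · exact absurd rfl hab
      · exact disj_of_mem b hb'
      · exact (disj_of_mem a ha').symm
      · exact hy a ((Finset.mem_sdiff.mp ha').1) b ((Finset.mem_sdiff.mp hb').1) hab
    -- cardinality facts
    have hxN : x' ∩ N = ∅ := by
      rw [Finset.eq_empty_iff_forall_notMem]
      intro g hg
      have hg1 : g ∈ x' := (Finset.mem_inter.mp hg).1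
      have hg2 : g ∈ N := (Finset.mem_inter.mp hg).2
      have hgy : g ∈ y := hNy hg2
      have hne : e ≠ g := by rintro rfl; exact hey hgy
      have := hx' e he g hg1 hne
      exact (Finset.mem_filter.mp hg2).2 this
    have hB : (x' ∩ y'').card = (x' ∩ y).card + 1 := by
      have h1 : x' ∩ y'' = insert e (x' ∩ (y \ N)) := by
        rw [hy''def, Finset.inter_insert_of_mem he]
      have h2 : x' ∩ (y \ N) = x' ∩ y := by
        ext g
        simp only [Finset.mem_inter, Finset.mem_sdiff]
        constructor
        · rintro ⟨h1', h2', _⟩; exact ⟨h1', h2'⟩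
        · rintro ⟨h1', h2'⟩
          refine ⟨h1', h2', fun hgN => ?_⟩
          have : g ∈ x' ∩ N := Finset.mem_inter.mpr ⟨h1', hgN⟩
          simp [hxN] at this
      rw [h1, h2, Finset.card_insert_of_notMem]
      intro hc
      exact hey (Finset.mem_inter.mp hc).2
    have hA : (x ∩ y).card ≤ (x ∩ y'').card + 2 := by
      have h1 : x ∩ y ⊆ (x ∩ y'') ∪ N := by
        intro g hg
        have hg1 := Finset.mem_inter.mp hg
        by_cases hgN : g ∈ N
        · exact Finset.mem_union_right _ hgN
        · refine Finset.mem_union_left _ (Finset.mem_inter.mpr ⟨hg1.1, ?_⟩)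
          exact Finset.mem_insert_of_mem (Finset.mem_sdiff.mpr ⟨hg1.2, hgN⟩)
      calc (x ∩ y).card ≤ ((x ∩ y'') ∪ N).card := Finset.card_le_card h1
        _ ≤ (x ∩ y'').card + N.card := Finset.card_union_le _ _
        _ ≤ (x ∩ y'').card + 2 := by omega
    -- contradiction with best-response property
    have hbr' := hbr y'' hy''m
    have hAr : ((x ∩ y).card : ℝ) ≤ ((x ∩ y'').card : ℝ) + 2 := by exact_mod_cast hA
    have hBr : ((x' ∩ y'').card : ℝ) = ((x' ∩ y).card : ℝ) + 1 := by exact_mod_cast hB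
    nlinarith [hbr', hAr, hBr]
  -- Step 2: |x ∩ π(x')| ≤ |x ∩ π(y)|
  have hC : (x ∩ x'.image π).card ≤ (x ∩ y.image π).card :=
    Finset.card_le_card (Finset.inter_subset_inter (subset_refl x) (Finset.image_subset_image hsub))
  -- Step 3: OPT ≤ 4 * |x ∩ π(x')|
  have hOPT : (∑ i, w i * ((m i ∩ yh.image π).card : ℝ)) ≤
      4 * ((x ∩ x'.image π).card : ℝ) := by
    calc (∑ i, w i * ((m i ∩ yh.image π).card : ℝ))
        ≤ ∑ i, w i * (4 * ((x ∩ x'.image π).card : ℝ)) := by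
          apply Finset.sum_le_sum
          intro i _
          apply mul_le_mul_of_nonneg_left _ (hw0 i)
          exact_mod_cast h4 (m i) yh (hm i) hyh
      _ = 4 * ((x ∩ x'.image π).card : ℝ) := by
          rw [← Finset.sum_mul, hw1, one_mul]
  -- Step 4: combine
  have hCr : ((x ∩ x'.image π).card : ℝ) ≤ ((x ∩ y.image π).card : ℝ) := by exact_mod_cast hC
  have hBnn : (0:ℝ) ≤ ((x' ∩ y.image π).card : ℝ) := Nat.cast_nonneg _
  have hDnn : (0:ℝ) ≤ ((x ∩ x'.image π).card : ℝ) := Nat.cast_nonneg _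
  nlinarith [hOPT, hCr, hBnn, hDnn]
end

section
/- In the Permuted Matching game with leader strategy X playing matching x with probability 1/3 - ε and matching x' with probability 2/3 + ε (0 < ε < 1/3), every best response y of the follower contains all edges of x'. -/
/-- If the leader plays matching `x` with probability `1/3-ε` and `x'` with
probability `2/3+ε` (`0 < ε < 1/3`), then every best response `y` of the
follower contains all edges of `x'`. -/
theorem best_response_contains {V E : Type*} [DecidableEq V] [DecidableEq E]
    (fst snd : E → V)
    (x x' : Finset E) (hx : IsMatching fst snd x) (hx' : IsMatching fst snd x')
    (ε : ℝ) (hε0 : 0 < ε) (hε1 : ε < 1/3)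
    (y : Finset E) (hy : IsMatching fst snd y)
    (hbr : ∀ y'' : Finset E, IsMatching fst snd y'' →
      (1/3 - ε) * ((x ∩ y'').card : ℝ) + (2/3 + ε) * ((x' ∩ y'').card : ℝ) ≤
      (1/3 - ε) * ((x ∩ y).card : ℝ) + (2/3 + ε) * ((x' ∩ y).card : ℝ)) :
    x' ⊆ y := by
  classical
  intro e' he'
  by_contra hne
  set S := y.filter (fun f => Disjoint (ends fst snd e') (ends fst snd f)) with hS
  set y'' := insert e' S with hy''def
  have hSy : S ⊆ y := Finset.filter_subset _ _
  have hmatch : IsMatching fst snd y'' := by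
    intro a ha b hb hab
    simp only [hy''def, Finset.mem_insert] at ha hb
    rcases ha with rfl | ha
    · rcases hb with rfl | hb
      · exact absurd rfl hab
      · exact (Finset.mem_filter.mp hb).2
    · rcases hb with rfl | hb
      · exact ((Finset.mem_filter.mp ha).2).symm
      · exact hy a (hSy ha) b (hSy hb) hab
  -- x' ∩ y'' gains at least one edge
  have h1 : ((x' ∩ y).card : ℝ) + 1 ≤ ((x' ∩ y'').card : ℝ) := by
    have hsub : insert e' (x' ∩ y) ⊆ x' ∩ y'' := by
      intro f hf
      rcases Finset.mem_insert.mp hf with rfl | hf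
      · exact Finset.mem_inter.mpr ⟨he', Finset.mem_insert_self _ _⟩
      · have hfx' := (Finset.mem_inter.mp hf).1
        have hfy := (Finset.mem_inter.mp hf).2
        have hfe : e' ≠ f := by rintro rfl; exact hne hfy
        have hd : Disjoint (ends fst snd e') (ends fst snd f) :=
          hx' e' he' f hfx' hfe
        exact Finset.mem_inter.mpr ⟨hfx',
          Finset.mem_insert.mpr (Or.inr (Finset.mem_filter.mpr ⟨hfy, hd⟩))⟩
    have hcard : (x' ∩ y).card + 1 ≤ (x' ∩ y'').card := by
      calc (x' ∩ y).card + 1 = (insert e' (x' ∩ y)).card := by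
            rw [Finset.card_insert_of_notMem
              (fun h => hne (Finset.mem_inter.mp h).2)]
        _ ≤ _ := Finset.card_le_card hsub
    exact_mod_cast hcard
  -- at most 2 edges of y are removed
  set B := y.filter (fun f => ¬ Disjoint (ends fst snd e') (ends fst snd f)) with hB
  have hB2 : B.card ≤ 2 := by
    have : B.card ≤ (ends fst snd e').card := by
      apply Finset.card_le_card_of_injOn
        (fun f => if h : ((ends fst snd e') ∩ (ends fst snd f)).Nonempty
          then h.choose else fst e')
      · intro f hf
        have hnd := (Finset.mem_filter.mp hf).2
        have hne' : ((ends fst snd e') ∩ (ends fst snd f)).Nonempty :=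
          Finset.not_disjoint_iff_nonempty_inter.mp hnd
        simp only [dif_pos hne']
        exact (Finset.mem_inter.mp hne'.choose_spec).1
      · intro a ha b hb hab
        by_contra hab'
        have hnda := (Finset.mem_filter.mp ha).2
        have hndb := (Finset.mem_filter.mp hb).2
        have hna := Finset.not_disjoint_iff_nonempty_inter.mp hnda
        have hnb := Finset.not_disjoint_iff_nonempty_inter.mp hndb
        simp only [dif_pos hna, dif_pos hnb] at hab
        have hva := (Finset.mem_inter.mp hna.choose_spec).2
        have hvb := (Finset.mem_inter.mp hnb.choose_spec).2
        rw [hab] at hva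
        have hd := hy a (Finset.mem_filter.mp ha).1 b (Finset.mem_filter.mp hb).1 hab'
        exact (Finset.disjoint_left.mp hd hva) hvb
    calc B.card ≤ (ends fst snd e').card := this
      _ ≤ 2 := by
        have := Finset.card_insert_le (fst e') ({snd e'} : Finset V)
        simpa [ends] using this
  -- x ∩ y loses at most 2 edges
  have h2 : ((x ∩ y).card : ℝ) ≤ ((x ∩ y'').card : ℝ) + 2 := by
    have hsub : x ∩ y ⊆ (x ∩ y'') ∪ B := by
      intro f hf
      have hfx := (Finset.mem_inter.mp hf).1
      have hfy := (Finset.mem_inter.mp hf).2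
      by_cases hd : Disjoint (ends fst snd e') (ends fst snd f)
      · exact Finset.mem_union_left _ (Finset.mem_inter.mpr ⟨hfx,
          Finset.mem_insert.mpr (Or.inr (Finset.mem_filter.mpr ⟨hfy, hd⟩))⟩)
      · exact Finset.mem_union_right _ (Finset.mem_filter.mpr ⟨hfy, hd⟩)
    have hcard : (x ∩ y).card ≤ (x ∩ y'').card + 2 :=
      le_trans (Finset.card_le_card hsub)
        (le_trans (Finset.card_union_le _ _) (by omega))
    exact_mod_cast hcard
  have hkey := hbr y'' hmatch
  nlinarith [h1, h2, hkey]
end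

section
/- In the hardness reduction for Permuted Matching: suppose every matching has at most n/2 edges, X is a finitely supported distribution over matchings, y is a matching with E_{x∼X}[|x ∩ π(y)|] ≥ (1-ε)n/2 (so also E_{x∼X}[|x|] ≥ (1-ε)n/2), and y is a best response to X, i.e., E_{x∼X}[|x ∩ y|] ≥ E_{x,x'∼X}[|x ∩ x'|]. Then |y ∩ π(y)| ≥ (1-13ε)n/2. -/
/-- `mdist x y = |x| + |y| - 2|x ∩ y|` computed in the integers. -/
def mdist {α : Type*} [DecidableEq α] (x y : Finset α) : ℤ :=
  (x.card : ℤ) + (y.card : ℤ) - 2 * ((x ∩ y).card : ℤ)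

/-- If `A, B ⊆ C` then `|A| + |B| ≤ |C| + |A ∩ B|`. -/
lemma card_add_card_le {α : Type*} [DecidableEq α] {A B C : Finset α}
    (hA : A ⊆ C) (hB : B ⊆ C) : A.card + B.card ≤ C.card + (A ∩ B).card := by
  have h1 := Finset.card_inter_add_card_union A B
  have h2 : (A ∪ B).card ≤ C.card := Finset.card_le_card (Finset.union_subset hA hB)
  omega

/-- Hardness reduction core for Permuted Matching: if every matching has at most
`n/2` edges, the leader payoff of `X` (weights `w` on matchings `m i`) against
`y` satisfies `E[|x ∩ π(y)|] ≥ (1-ε)n/2`, and `y` is a best response to `X`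
(`E[|x ∩ y|] ≥ E_{x,x'}[|x ∩ x'|]`), then `|y ∩ π(y)| ≥ (1-13ε)n/2`. -/
theorem stackelberg_implies_near_invariant_matching
    {E : Type*} [DecidableEq E] (π : Equiv.Perm E)
    {ι : Type*} [Fintype ι]
    (n ε : ℝ) (hn : 0 < n) (hε : 0 ≤ ε)
    (w : ι → ℝ) (hw0 : ∀ i, 0 ≤ w i) (hw1 : ∑ i, w i = 1)
    (m : ι → Finset E) (hm : ∀ i, ((m i).card : ℝ) ≤ n / 2)
    (y : Finset E) (hy : ((y.card : ℝ)) ≤ n / 2)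
    (hlead : (1 - ε) * n / 2 ≤ ∑ i, w i * (((m i ∩ y.image π).card : ℕ) : ℝ))
    (hbr : ∑ i, ∑ j, w i * w j * (((m i ∩ m j).card : ℕ) : ℝ) ≤
      ∑ i, w i * (((m i ∩ y).card : ℕ) : ℝ)) :
    (1 - 13 * ε) * n / 2 ≤ ((y ∩ y.image π).card : ℝ) := by
  set Y : Finset E := y.image π with hY
  -- |y*| = |y|
  have hpcard : (Y.card : ℝ) = (y.card : ℝ) := by
    rw [hY, Finset.card_image_of_injective _ π.injective]
  -- triangle fact 1, real version
  have key1 : ∀ i j, ((m i ∩ Y).card : ℝ) + ((m j ∩ Y).card : ℝ)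
      ≤ (Y.card : ℝ) + ((m i ∩ m j).card : ℝ) := by
    intro i j
    have h := card_add_card_le (show m i ∩ Y ⊆ Y from Finset.inter_subset_right)
      (show m j ∩ Y ⊆ Y from Finset.inter_subset_right)
    have h2 : ((m i ∩ Y) ∩ (m j ∩ Y)).card ≤ (m i ∩ m j).card := by
      apply Finset.card_le_card
      intro a ha
      simp only [Finset.mem_inter] at ha ⊢
      tauto
    exact_mod_cast le_trans h (by omega)
  -- triangle fact 2
  have key2 : ∀ i, ((m i ∩ y).card : ℝ) + ((m i ∩ Y).card : ℝ)
      ≤ ((m i).card : ℝ) + ((y ∩ Y).card : ℝ) := by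
    intro i
    have h := card_add_card_le (show m i ∩ y ⊆ m i from Finset.inter_subset_left)
      (show m i ∩ Y ⊆ m i from Finset.inter_subset_left)
    have h2 : ((m i ∩ y) ∩ (m i ∩ Y)).card ≤ (y ∩ Y).card := by
      apply Finset.card_le_card
      intro a ha
      simp only [Finset.mem_inter] at ha ⊢
      tauto
    exact_mod_cast le_trans h (by omega)
  set Sstar : ℝ := ∑ i, w i * (((m i ∩ Y).card : ℕ) : ℝ) with hSstar
  set S : ℝ := ∑ i, w i * (((m i ∩ y).card : ℕ) : ℝ) with hS
  set A : ℝ := ∑ i, w i * (((m i).card : ℕ) : ℝ) with hA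
  set q : ℝ := ((y ∩ Y).card : ℝ) with hq
  set p : ℝ := (Y.card : ℝ) with hp
  -- double sum lower bound: 2 S* - p ≤ ∑∑ w i w j c ij
  have hdouble : 2 * Sstar - p ≤ ∑ i, ∑ j, w i * w j * (((m i ∩ m j).card : ℕ) : ℝ) := by
    have step : ∑ i, ∑ j, w i * w j *
        (((m i ∩ Y).card : ℝ) + ((m j ∩ Y).card : ℝ) - p)
        ≤ ∑ i, ∑ j, w i * w j * (((m i ∩ m j).card : ℕ) : ℝ) := by
      apply Finset.sum_le_sum; intro i _
      apply Finset.sum_le_sum; intro j _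
      apply mul_le_mul_of_nonneg_left _ (mul_nonneg (hw0 i) (hw0 j))
      have := key1 i j
      -- cast ok
      linarith
    refine le_trans (le_of_eq ?_) step
    have inner : ∀ i, ∑ j, w i * w j *
        (((m i ∩ Y).card : ℝ) + ((m j ∩ Y).card : ℝ) - p)
        = w i * ((m i ∩ Y).card : ℝ) + w i * Sstar - w i * p := by
      intro i
      have h1 : ∀ j, w i * w j * (((m i ∩ Y).card : ℝ) + ((m j ∩ Y).card : ℝ) - p)
          = (w i * ((m i ∩ Y).card : ℝ)) * w j + w i * (w j * ((m j ∩ Y).card : ℝ))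
            - (w i * p) * w j := fun j => by ring
      rw [Finset.sum_congr rfl (fun j _ => h1 j), Finset.sum_sub_distrib,
        Finset.sum_add_distrib, ← Finset.mul_sum, ← Finset.mul_sum, ← Finset.mul_sum, hw1,
        mul_one, mul_one, ← hSstar]
    rw [Finset.sum_congr rfl (fun i _ => inner i), Finset.sum_sub_distrib,
      Finset.sum_add_distrib, ← Finset.sum_mul, ← Finset.sum_mul, hw1, one_mul, one_mul,
      ← hSstar]
    ring
  -- key2 weighted: S + S* ≤ A + q
  have hSS : S + Sstar ≤ A + q := by
    have step : ∑ i, w i * (((m i ∩ y).card : ℝ) + ((m i ∩ Y).card : ℝ))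
        ≤ ∑ i, w i * (((m i).card : ℝ) + q) := by
      apply Finset.sum_le_sum; intro i _
      exact mul_le_mul_of_nonneg_left (key2 i) (hw0 i)
    have lhs : ∑ i, w i * (((m i ∩ y).card : ℝ) + ((m i ∩ Y).card : ℝ)) = S + Sstar := by
      rw [hS, hSstar, ← Finset.sum_add_distrib]
      apply Finset.sum_congr rfl; intro i _; ring
    have rhs : ∑ i, w i * (((m i).card : ℝ) + q) = A + q := by
      have h1 : ∀ i, w i * (((m i).card : ℝ) + q) = w i * ((m i).card : ℝ) + w i * q :=
        fun i => by ring
      rw [Finset.sum_congr rfl (fun i _ => h1 i), Finset.sum_add_distrib, ← Finset.sum_mul,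
        hw1, one_mul, hA]
    linarith [lhs ▸ rhs ▸ step]
  -- A ≤ n/2
  have hAle : A ≤ n / 2 := by
    calc A ≤ ∑ i, w i * (n / 2) := by
            apply Finset.sum_le_sum; intro i _
            exact mul_le_mul_of_nonneg_left (by exact_mod_cast hm i) (hw0 i)
      _ = n / 2 := by rw [← Finset.sum_mul, hw1, one_mul]
  have hple : p ≤ n / 2 := by rw [hpcard]; exact hy
  have hSstarge : (1 - ε) * n / 2 ≤ Sstar := hlead
  -- combine: q ≥ S + S* - A ≥ (2S* - p) + S* - A ≥ 3(1-ε)n/2 - n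
  have hq3 : 3 * ((1 - ε) * n / 2) - n ≤ q := by
    have h1 : 2 * Sstar - p ≤ S := le_trans hdouble hbr
    linarith
  have hεn : 0 ≤ ε * n := mul_nonneg hε hn.le
  calc (1 - 13 * ε) * n / 2 ≤ 3 * ((1 - ε) * n / 2) - n := by nlinarith
    _ ≤ q := hq3
end
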